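/- Suppose the synchronous-move pursuit-evasion game admits a pure-strategy Nash equilibrium, and let μ* and ν* be any stationary policies with μ*(s_p,s_e)∈argmin_{n_p∈N[s_p]} max_{n_e∈N[s_e]} D(n_p,n_e) and ν*(s_p,s_e)∈argmax_{n_e∈N[s_e]} min_{n_p∈N[s_p]} D(n_p,n_e). Then for every state s the synchronous play under (μ*,ν*) first reaches a state with f=1 exactly at time D(s): T^{μ*,ν*}(s)=D(s); equivalently, the equilibrium value satisfies V^{μ*,ν*}(s)=γ^{D(s)} (with γ^∞:=0). -/

import Mathlib

open scoped ENat

/-- Closed neighborhood `N[v]`: stay at `v` or cross one edge of `G`. -/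
def closedNbr {V : Type*} (G : SimpleGraph V) (v : V) : Set V :=
  {u | u = v ∨ G.Adj v u}

/-- Joint pursuer moves: all `m` pursuers move simultaneously, each within a
closed neighborhood. -/
def jointNbr {V : Type*} (G : SimpleGraph V) {m : ℕ} (sp : Fin m → V) :
    Set (Fin m → V) :=
  {np | ∀ i, np i ∈ closedNbr G (sp i)}

/-- Capture sets `C_k`: `C_0 = {s | f s = 1}` and
`C_{k+1} = C_k ∪ {(s_p,s_e) | ∃ n_p ∈ N[s_p], ∀ n_e ∈ N[s_e], (n_p,n_e) ∈ C_k}`. -/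
def captureSet {V : Type*} (G : SimpleGraph V) {m : ℕ}
    (f : (Fin m → V) × V → Bool) : ℕ → Set ((Fin m → V) × V)
  | 0 => {s | f s = true}
  | k + 1 => captureSet G f k ∪
      {s | ∃ np ∈ jointNbr G s.1, ∀ ne ∈ closedNbr G s.2, (np, ne) ∈ captureSet G f k}

/-- The distance table `D(s) = min {k | s ∈ C_k}` (and `∞` if `s` lies in no `C_k`). -/
noncomputable def Dtab {V : Type*} (G : SimpleGraph V) {m : ℕ}
    (f : (Fin m → V) × V → Bool) (s : (Fin m → V) × V) : ℕ∞ :=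
  sInf {k : ℕ∞ | ∃ n : ℕ, k = n ∧ s ∈ captureSet G f n}

/-- `γ^d` for `d ∈ ℕ∪{∞}`, with the convention `γ^∞ = 0`. -/
noncomputable def gpow (γ : ℝ) (d : ℕ∞) : ℝ :=
  if d = ⊤ then 0 else γ ^ d.toNat

/-- A deterministic stationary pursuer policy is valid if `μ(s) ∈ N[s_p]`. -/
def ValidP {V : Type*} (G : SimpleGraph V) {m : ℕ}
    (μ : (Fin m → V) × V → (Fin m → V)) : Prop :=
  ∀ s, μ s ∈ jointNbr G s.1

/-- A deterministic stationary (synchronous) evader policy is valid if `ν(s) ∈ N[s_e]`. -/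
def ValidE {V : Type*} (G : SimpleGraph V) {m : ℕ}
    (ν : (Fin m → V) × V → V) : Prop :=
  ∀ s, ν s ∈ closedNbr G s.2

/-- The synchronous play from `s` under `(μ, ν)`: `s^0 = s` and
`s^{t+1} = (μ(s^t), ν(s^t))` while `f(s^t) = 0`; the play stops once `f = 1`. -/
def syncPlay {V : Type*} {m : ℕ} (f : (Fin m → V) × V → Bool)
    (μ : (Fin m → V) × V → (Fin m → V)) (ν : (Fin m → V) × V → V)
    (s : (Fin m → V) × V) : ℕ → (Fin m → V) × V
  | 0 => s
  | t + 1 =>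
      let c := syncPlay f μ ν s t
      if f c = true then c else (μ c, ν c)

/-- `T^{μ,ν}(s)`: the least `t` with `f(s^t) = 1` along the synchronous play
(`∞` if none). -/
noncomputable def syncT {V : Type*} {m : ℕ} (f : (Fin m → V) × V → Bool)
    (μ : (Fin m → V) × V → (Fin m → V)) (ν : (Fin m → V) × V → V)
    (s : (Fin m → V) × V) : ℕ∞ :=
  sInf {k : ℕ∞ | ∃ t : ℕ, k = t ∧ f (syncPlay f μ ν s t) = true}

/-- The discounted value `V^{μ,ν}(s) = γ^{T^{μ,ν}(s)}` (with `γ^∞ = 0`). -/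
noncomputable def syncV {V : Type*} {m : ℕ} (γ : ℝ) (f : (Fin m → V) × V → Bool)
    (μ : (Fin m → V) × V → (Fin m → V)) (ν : (Fin m → V) × V → V)
    (s : (Fin m → V) × V) : ℝ :=
  gpow γ (syncT f μ ν s)

/-- `(μ0, ν0)` is a pure-strategy Nash equilibrium of the synchronous-move game:
`V^{μ,ν0}(s) ≤ V^{μ0,ν0}(s) ≤ V^{μ0,ν}(s)` for all deterministic stationary policies
`μ, ν` and all states `s`. -/
def IsNash {V : Type*} (G : SimpleGraph V) {m : ℕ} (γ : ℝ)
    (f : (Fin m → V) × V → Bool)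
    (μ0 : (Fin m → V) × V → (Fin m → V)) (ν0 : (Fin m → V) × V → V) : Prop :=
  ValidP G μ0 ∧ ValidE G ν0 ∧
  (∀ μ, ValidP G μ → ∀ s, syncV γ f μ ν0 s ≤ syncV γ f μ0 ν0 s) ∧
  (∀ ν, ValidE G ν → ∀ s, syncV γ f μ0 ν0 s ≤ syncV γ f μ0 ν s)

/-- A DP pursuer policy: a stationary policy with
`μ*(s_p,s_e) ∈ argmin_{n_p ∈ N[s_p]} max_{n_e ∈ N[s_e]} D(n_p,n_e)`. -/
def IsDPPursuer {V : Type*} (G : SimpleGraph V) {m : ℕ}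
    (f : (Fin m → V) × V → Bool) (μ : (Fin m → V) × V → (Fin m → V)) : Prop :=
  ∀ s : (Fin m → V) × V, μ s ∈ jointNbr G s.1 ∧
    ∀ np ∈ jointNbr G s.1,
      (⨆ ne ∈ closedNbr G s.2, Dtab G f (μ s, ne)) ≤
        ⨆ ne ∈ closedNbr G s.2, Dtab G f (np, ne)

/-- A DP synchronous evader policy: a stationary policy with
`ν*(s_p,s_e) ∈ argmax_{n_e ∈ N[s_e]} min_{n_p ∈ N[s_p]} D(n_p,n_e)`. -/
def IsDPEvaderSync {V : Type*} (G : SimpleGraph V) {m : ℕ}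
    (f : (Fin m → V) × V → Bool) (ν : (Fin m → V) × V → V) : Prop :=
  ∀ s : (Fin m → V) × V, ν s ∈ closedNbr G s.2 ∧
    ∀ ne ∈ closedNbr G s.2,
      (⨅ np ∈ jointNbr G s.1, Dtab G f (np, ne)) ≤
        ⨅ np ∈ jointNbr G s.1, Dtab G f (np, ν s)

/-!
The table `D` satisfies the two one-step Bellman inequalities of the game, and a play along which
`D` drops by at least (resp. at most) one per non-terminal step is captured no later (resp. no
earlier) than time `D`. The DP pursuer forces a drop of at least one against every evader. The
drop of at most one against the DP evader is where the equilibrium `(μ₀, ν₀)` enters: first, its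
capture time is `D`, squeezed between a DP-pursuer deviation and a best-response evader; then, if
some pursuer move `n_p` had `D(n_p, ν₀ s) + 1 < D(s)`, deviating to `n_p` at `s` and playing DP
elsewhere would capture strictly before time `D(s)` against `ν₀`, contradicting the equilibrium.
So `D(s) ≤ min_{n_p} D(n_p, ν₀ s) + 1`, and the maximin choice of the DP evader keeps this bound.
-/

theorem sInf_setOf_natCast_le_iff {P : ℕ → Prop} (hP : Monotone P) (n : ℕ) :
    sInf {k : ℕ∞ | ∃ i : ℕ, k = i ∧ P i} ≤ n ↔ P n := by
  refine ⟨fun h => ?_, fun h => sInf_le ⟨n, rfl, h⟩⟩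
  obtain ⟨_, ⟨i, rfl, hi⟩, hin⟩ :=
    sInf_lt_iff.mp (h.trans_lt (ENat.natCast_lt_natCast.mpr n.lt_succ_self))
  exact hP (Nat.lt_succ_iff.mp (ENat.natCast_lt_natCast.mp hin)) hi

section CaptureSets

variable {V : Type*} {G : SimpleGraph V} {m : ℕ} {f : (Fin m → V) × V → Bool}
  {s : (Fin m → V) × V}

theorem self_mem_closedNbr (v : V) : v ∈ closedNbr G v := Or.inl rfl

theorem self_mem_jointNbr (sp : Fin m → V) : sp ∈ jointNbr G sp :=
  fun _ => self_mem_closedNbr _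

theorem captureSet_mono : Monotone (captureSet G f) :=
  monotone_nat_of_le_succ fun _ => Set.subset_union_left

theorem mem_captureSet_succ_iff {k : ℕ} :
    s ∈ captureSet G f (k + 1) ↔ f s = true ∨
      ∃ np ∈ jointNbr G s.1, ∀ ne ∈ closedNbr G s.2, (np, ne) ∈ captureSet G f k := by
  refine ⟨fun hs => ?_, ?_⟩
  · induction k with
    | zero => exact hs
    | succ k ih =>
      rcases hs with hs | hs
      · exact (ih hs).imp_right fun ⟨np, hnp, h⟩ =>
          ⟨np, hnp, fun ne hne => captureSet_mono k.le_succ (h ne hne)⟩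
      · exact Or.inr hs
  · rintro (hs | hs)
    · exact captureSet_mono (Nat.zero_le _) hs
    · exact Or.inr hs

theorem Dtab_le_natCast_iff {n : ℕ} : Dtab G f s ≤ n ↔ s ∈ captureSet G f n :=
  sInf_setOf_natCast_le_iff (fun _ _ hij hs => captureSet_mono hij hs) n

theorem Dtab_le_iSup_add_one {np : Fin m → V} (hnp : np ∈ jointNbr G s.1) :
    Dtab G f s ≤ (⨆ ne ∈ closedNbr G s.2, Dtab G f (np, ne)) + 1 := by
  generalize hM : (⨆ ne ∈ closedNbr G s.2, Dtab G f (np, ne)) = M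
  induction M using ENat.recTopCoe with
  | top => simp
  | coe j =>
    have hC : ∀ ne ∈ closedNbr G s.2, (np, ne) ∈ captureSet G f j := fun ne hne =>
      Dtab_le_natCast_iff.mp (hM ▸ le_iSup₂ (f := fun ne _ => Dtab G f (np, ne)) ne hne)
    exact_mod_cast Dtab_le_natCast_iff.mpr (mem_captureSet_succ_iff.mpr (Or.inr ⟨np, hnp, hC⟩))

theorem exists_iSup_add_one_le_Dtab (hs : f s = false) :
    ∃ np ∈ jointNbr G s.1, (⨆ ne ∈ closedNbr G s.2, Dtab G f (np, ne)) + 1 ≤ Dtab G f s := by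
  generalize hD : Dtab G f s = D
  induction D using ENat.recTopCoe with
  | top => exact ⟨s.1, self_mem_jointNbr _, le_top⟩
  | coe n =>
    obtain _ | j := n
    · have hs' : f s = true := Dtab_le_natCast_iff.mp hD.le
      simp [hs] at hs'
    · obtain hs' | ⟨np, hnp, hC⟩ := mem_captureSet_succ_iff.mp (Dtab_le_natCast_iff.mp hD.le)
      · simp [hs] at hs'
      · refine ⟨np, hnp, ?_⟩
        push_cast
        gcongr
        exact iSup₂_le fun ne hne => Dtab_le_natCast_iff.mpr (hC ne hne)

end CaptureSets

section Play

variable {V : Type*} {G : SimpleGraph V} {m : ℕ} {f : (Fin m → V) × V → Bool}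
  {p : (Fin m → V) × V → (Fin m → V)} {e : (Fin m → V) × V → V} {s : (Fin m → V) × V}

theorem syncPlay_succ_of_captured {t : ℕ} (ht : f (syncPlay f p e s t) = true) :
    syncPlay f p e s (t + 1) = syncPlay f p e s t := by
  simp only [syncPlay, ht, if_true]

theorem syncPlay_succ_of_not_captured (hs : f s = false) :
    ∀ t, syncPlay f p e s (t + 1) = syncPlay f p e (p s, e s) t
  | 0 => by simp [syncPlay, hs]
  | t + 1 => by rw [syncPlay, syncPlay_succ_of_not_captured hs t]; rfl

theorem syncT_le_natCast_iff {n : ℕ} : syncT f p e s ≤ n ↔ f (syncPlay f p e s n) = true :=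
  sInf_setOf_natCast_le_iff
    (monotone_nat_of_le_succ fun _ ht => (syncPlay_succ_of_captured ht).symm ▸ ht) n

theorem syncT_eq_add_one (hs : f s = false) : syncT f p e s = syncT f p e (p s, e s) + 1 := by
  refine WithTop.eq_of_forall_le_coe_iff fun n => ?_
  change syncT f p e s ≤ (n : ℕ∞) ↔ syncT f p e (p s, e s) + 1 ≤ (n : ℕ∞)
  cases n with
  | zero => exact iff_of_false (by rw [syncT_le_natCast_iff]; simp [syncPlay, hs]) (by simp)
  | succ n =>
    rw [syncT_le_natCast_iff, syncPlay_succ_of_not_captured hs, ← syncT_le_natCast_iff,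
      Nat.cast_succ, ENat.add_le_add_iff_right ENat.one_ne_top]

theorem syncT_le_Dtab_of_forall_add_one_le
    (H : ∀ t, f t = false → Dtab G f (p t, e t) + 1 ≤ Dtab G f t) (s : (Fin m → V) × V) :
    syncT f p e s ≤ Dtab G f s := by
  suffices ∀ (n : ℕ) s, Dtab G f s ≤ n → syncT f p e s ≤ n from
    WithTop.forall_le_coe_iff_le.mp fun n => this n s
  intro n
  induction n with
  | zero => exact fun s hs => syncT_le_natCast_iff.mpr (Dtab_le_natCast_iff.mp hs)
  | succ n ih =>
    intro s hs
    cases hfs : f s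
    · rw [syncT_eq_add_one hfs, Nat.cast_succ]
      gcongr
      refine ih _ ?_
      rw [← ENat.add_le_add_iff_right ENat.one_ne_top, ← Nat.cast_succ]
      exact (H s hfs).trans hs
    · exact (syncT_le_natCast_iff (n := 0)).mpr hfs |>.trans (by simp)

theorem Dtab_le_syncT_of_forall_le_add_one
    (H : ∀ t, f t = false → Dtab G f t ≤ Dtab G f (p t, e t) + 1) (s : (Fin m → V) × V) :
    Dtab G f s ≤ syncT f p e s := by
  suffices ∀ (n : ℕ) s, syncT f p e s ≤ n → Dtab G f s ≤ n from
    WithTop.forall_le_coe_iff_le.mp fun n => this n s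
  intro n
  induction n with
  | zero => exact fun s hs => Dtab_le_natCast_iff.mpr (syncT_le_natCast_iff.mp hs)
  | succ n ih =>
    intro s hs
    cases hfs : f s
    · rw [syncT_eq_add_one hfs, Nat.cast_succ, ENat.add_le_add_iff_right ENat.one_ne_top] at hs
      exact (H s hfs).trans (by push_cast; gcongr; exact ih _ hs)
    · exact (Dtab_le_natCast_iff (n := 0)).mpr hfs |>.trans (by simp)

end Play

section Policies

variable {V : Type*} {G : SimpleGraph V} {m : ℕ} {f : (Fin m → V) × V → Bool}
  {μ p : (Fin m → V) × V → (Fin m → V)} {ν e : (Fin m → V) × V → V} {t : (Fin m → V) × V}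

theorem IsDPPursuer.validP (hμ : IsDPPursuer G f μ) : ValidP G μ := fun s => (hμ s).1

theorem IsDPEvaderSync.validE (hν : IsDPEvaderSync G f ν) : ValidE G ν := fun s => (hν s).1

theorem IsDPPursuer.Dtab_add_one_le (hμ : IsDPPursuer G f μ) (he : ValidE G e)
    (ht : f t = false) : Dtab G f (μ t, e t) + 1 ≤ Dtab G f t := by
  obtain ⟨np, hnp, hD⟩ := exists_iSup_add_one_le_Dtab ht
  calc Dtab G f (μ t, e t) + 1 ≤ (⨆ ne ∈ closedNbr G t.2, Dtab G f (μ t, ne)) + 1 := by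
        gcongr; exact le_iSup₂ (f := fun ne _ => Dtab G f (μ t, ne)) (e t) (he t)
    _ ≤ (⨆ ne ∈ closedNbr G t.2, Dtab G f (np, ne)) + 1 := by gcongr ?_ + 1; exact (hμ t).2 np hnp
    _ ≤ Dtab G f t := hD

theorem exists_validE_forall_Dtab_le_add_one [Finite V] (hp : ValidP G p) :
    ∃ e, ValidE G e ∧ ∀ t, Dtab G f t ≤ Dtab G f (p t, e t) + 1 := by
  have hmax : ∀ t : (Fin m → V) × V, ∃ ne ∈ closedNbr G t.2,
      ∀ x ∈ closedNbr G t.2, Dtab G f (p t, x) ≤ Dtab G f (p t, ne) := fun t =>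
    Set.exists_max_image _ _ (Set.toFinite _) ⟨t.2, self_mem_closedNbr _⟩
  choose e he hmax using hmax
  exact ⟨e, he, fun t => (Dtab_le_iSup_add_one (hp t)).trans (by gcongr; exact iSup₂_le (hmax t))⟩

end Policies

theorem gpow_strictAnti {γ : ℝ} (hγ0 : 0 < γ) (hγ1 : γ < 1) : StrictAnti (gpow γ) := by
  intro a b hab
  lift a to ℕ using hab.ne_top
  induction b using ENat.recTopCoe with
  | top => simpa [gpow] using pow_pos hγ0 a
  | coe k =>
    simpa [gpow] using pow_lt_pow_right_of_lt_one₀ hγ0 hγ1 (ENat.natCast_lt_natCast.mp hab)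

namespace IsNash

variable {V : Type*} {G : SimpleGraph V} {m : ℕ} {f : (Fin m → V) × V → Bool}
  {γ : ℝ} (hγ0 : 0 < γ) (hγ1 : γ < 1)
  {μ₀ μ p : (Fin m → V) × V → (Fin m → V)} {ν₀ e : (Fin m → V) × V → V}
  {s : (Fin m → V) × V}
include hγ0 hγ1

theorem syncT_le_of_validP (hN : IsNash G γ f μ₀ ν₀) (hp : ValidP G p) (s : (Fin m → V) × V) :
    syncT f μ₀ ν₀ s ≤ syncT f p ν₀ s :=
  (gpow_strictAnti hγ0 hγ1).le_iff_ge.mp (hN.2.2.1 p hp s)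

theorem syncT_le_of_validE (hN : IsNash G γ f μ₀ ν₀) (he : ValidE G e) (s : (Fin m → V) × V) :
    syncT f μ₀ e s ≤ syncT f μ₀ ν₀ s :=
  (gpow_strictAnti hγ0 hγ1).le_iff_ge.mp (hN.2.2.2 e he s)

theorem syncT_eq_Dtab [Finite V] (hN : IsNash G γ f μ₀ ν₀) (hμ : IsDPPursuer G f μ)
    (s : (Fin m → V) × V) : syncT f μ₀ ν₀ s = Dtab G f s := by
  obtain ⟨e, he, hDe⟩ := exists_validE_forall_Dtab_le_add_one (f := f) hN.1
  apply le_antisymm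
  · calc syncT f μ₀ ν₀ s ≤ syncT f μ ν₀ s := hN.syncT_le_of_validP hγ0 hγ1 hμ.validP s
      _ ≤ Dtab G f s :=
        syncT_le_Dtab_of_forall_add_one_le (fun _ ht => hμ.Dtab_add_one_le hN.2.1 ht) s
  · calc Dtab G f s ≤ syncT f μ₀ e s := Dtab_le_syncT_of_forall_le_add_one (fun t _ => hDe t) s
      _ ≤ syncT f μ₀ ν₀ s := hN.syncT_le_of_validE hγ0 hγ1 he s

theorem Dtab_le_Dtab_add_one [Finite V] (hN : IsNash G γ f μ₀ ν₀) (hμ : IsDPPursuer G f μ)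
    (hs : f s = false) {np : Fin m → V} (hnp : np ∈ jointNbr G s.1) :
    Dtab G f s ≤ Dtab G f (np, ν₀ s) + 1 := by
  classical
  by_contra! hlt
  set p := Function.update μ s np
  have hp : ValidP G p := by
    intro t
    by_cases h : t = s
    · subst h; simpa [p] using hnp
    · simpa [p, h] using hμ.validP t
  have hdesc : ∀ t, f t = false → Dtab G f (p t, ν₀ t) + 1 ≤ Dtab G f t := by
    intro t ht
    by_cases h : t = s
    · subst h; simpa [p] using hlt.le
    · simpa [p, h] using hμ.Dtab_add_one_le hN.2.1 ht
  have hfaster : syncT f μ₀ ν₀ s < Dtab G f s :=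
    calc syncT f μ₀ ν₀ s ≤ syncT f p ν₀ s := hN.syncT_le_of_validP hγ0 hγ1 hp s
      _ = syncT f p ν₀ (np, ν₀ s) + 1 := by rw [syncT_eq_add_one hs]; simp [p]
      _ ≤ Dtab G f (np, ν₀ s) + 1 := by
        gcongr; exact syncT_le_Dtab_of_forall_add_one_le hdesc _
      _ < Dtab G f s := hlt
  exact hfaster.ne (hN.syncT_eq_Dtab hγ0 hγ1 hμ s)

end IsNash

theorem IsDPEvaderSync.Dtab_le_add_one {V : Type*} [Finite V] {G : SimpleGraph V} {m : ℕ}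
    {f : (Fin m → V) × V → Bool} {γ : ℝ} (hγ0 : 0 < γ) (hγ1 : γ < 1)
    {μ₀ μ : (Fin m → V) × V → (Fin m → V)} {ν₀ ν : (Fin m → V) × V → V}
    (hN : IsNash G γ f μ₀ ν₀) (hμ : IsDPPursuer G f μ) (hν : IsDPEvaderSync G f ν)
    {t : (Fin m → V) × V} (ht : f t = false) : Dtab G f t ≤ Dtab G f (μ t, ν t) + 1 :=
  calc Dtab G f t ≤ (⨅ np ∈ jointNbr G t.1, Dtab G f (np, ν₀ t)) + 1 := by
        simp only [ENat.iInf_add]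
        exact le_iInf₂ fun np hnp => hN.Dtab_le_Dtab_add_one hγ0 hγ1 hμ ht hnp
    _ ≤ (⨅ np ∈ jointNbr G t.1, Dtab G f (np, ν t)) + 1 := by
        gcongr ?_ + 1; exact (hν t).2 _ (hN.2.1 t)
    _ ≤ Dtab G f (μ t, ν t) + 1 := by
        gcongr; exact iInf₂_le (f := fun np _ => Dtab G f (np, ν t)) _ (hμ t).1

theorem dp_play_capture_time_eq_D_general {V : Type*} [Fintype V] (G : SimpleGraph V)
    (m : ℕ) (f : (Fin m → V) × V → Bool)
    (γ : ℝ) (hγ0 : 0 < γ) (hγ1 : γ < 1)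
    (hNE : ∃ μ0 ν0, IsNash G γ f μ0 ν0)
    (μ : (Fin m → V) × V → (Fin m → V)) (hμ : IsDPPursuer G f μ)
    (ν : (Fin m → V) × V → V) (hν : IsDPEvaderSync G f ν) :
    ∀ s : (Fin m → V) × V,
      syncT f μ ν s = Dtab G f s ∧ syncV γ f μ ν s = gpow γ (Dtab G f s) := by
  obtain ⟨μ₀, ν₀, hN⟩ := hNE
  intro s
  have hT : syncT f μ ν s = Dtab G f s :=
    le_antisymm
      (syncT_le_Dtab_of_forall_add_one_le (fun _ ht => hμ.Dtab_add_one_le hν.validE ht) s)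
      (Dtab_le_syncT_of_forall_le_add_one
        (fun _ ht => hν.Dtab_le_add_one hγ0 hγ1 hN hμ ht) s)
  exact ⟨hT, by rw [syncV, hT]⟩

/-- If the synchronous-move game admits a pure-strategy Nash equilibrium and
`(μ*, ν*)` is any pair of DP policies, then for every state `s` the synchronous play
under `(μ*, ν*)` first reaches a state with `f = 1` exactly at time `D(s)`:
`T^{μ*,ν*}(s) = D(s)`; equivalently `V^{μ*,ν*}(s) = γ^{D(s)}` (with `γ^∞ = 0`). -/
theorem dp_play_capture_time_eq_D {V : Type*} [Fintype V] (G : SimpleGraph V)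
    (m : ℕ) (hm : 1 ≤ m) (f : (Fin m → V) × V → Bool)
    (γ : ℝ) (hγ0 : 0 < γ) (hγ1 : γ < 1)
    (hNE : ∃ μ0 ν0, IsNash G γ f μ0 ν0)
    (μ : (Fin m → V) × V → (Fin m → V)) (hμ : IsDPPursuer G f μ)
    (ν : (Fin m → V) × V → V) (hν : IsDPEvaderSync G f ν) :
    ∀ s : (Fin m → V) × V,
      syncT f μ ν s = Dtab G f s ∧ syncV γ f μ ν s = gpow γ (Dtab G f s) :=
  dp_play_capture_time_eq_D_general G m f γ hγ0 hγ1 hNE μ hμ ν hν
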